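/- Let S = {F_t}_{t≥0} be a one-parameter continuous semigroup on Δ generated by a holomorphic function f : Δ → ℂ, let τ ∈ ∂Δ be a boundary null point of f, and suppose ∠lim_{z→τ} f′(z) = 0 (so the semigroup is of parabolic type). If in addition ∠lim_{z→τ} f″(z) = 0 and ∠lim_{z→τ} f‴(z) = 0, then F_t is the identity: F_t(z) = z for all t ≥ 0 and all z ∈ Δ. -/

import Mathlib

open Complex Filter Set

noncomputable section

/-- The open unit disk in the complex plane. -/
def unitDisk : Set ℂ := {z : ℂ | ‖z‖ < 1}

/-- The Stolz angle at a boundary point `τ` with half-opening `α`. -/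
def stolzAngle (τ : ℂ) (α : ℝ) : Set ℂ :=
  {z ∈ unitDisk | |Complex.arg (1 - (starRingEnd ℂ) τ * z)| < α}

/-- `h` has angular limit `L` at `τ`: `h z → L` as `z → τ` in every Stolz angle. -/
def AngularLimit (h : ℂ → ℂ) (τ L : ℂ) : Prop :=
  ∀ α : ℝ, 0 < α → α < Real.pi / 2 →
    Tendsto h (nhdsWithin τ (stolzAngle τ α)) (nhds L)

/-- A one-parameter continuous semigroup of holomorphic self-mappings of the unit disk. -/
structure ContSemigroupOn (F : ℝ → ℂ → ℂ) : Prop where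
  holo : ∀ t : ℝ, 0 ≤ t → DifferentiableOn ℂ (F t) unitDisk
  maps : ∀ t : ℝ, 0 ≤ t → MapsTo (F t) unitDisk unitDisk
  comp : ∀ s : ℝ, 0 ≤ s → ∀ t : ℝ, 0 ≤ t → ∀ z ∈ unitDisk, F (t + s) z = F t (F s z)
  cont : ∀ z ∈ unitDisk, Tendsto (fun t : ℝ => F t z) (nhdsWithin 0 (Set.Ioi 0)) (nhds z)

/-- `f` is the infinitesimal generator of the semigroup `F`:
for each `z ∈ Δ`, `u(t) = F t z` solves `u' + f(u) = 0`, `u 0 = z`. -/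
def Generates (f : ℂ → ℂ) (F : ℝ → ℂ → ℂ) : Prop :=
  ∀ z ∈ unitDisk, F 0 z = z ∧
    ∀ t : ℝ, 0 ≤ t →
      HasDerivWithinAt (fun s : ℝ => F s z) (-(f (F t z))) (Set.Ici 0) t

/-- `τ` is a boundary null point of `f`: `f (r τ) → 0` as `r → 1⁻`. -/
def BoundaryNullPoint (f : ℂ → ℂ) (τ : ℂ) : Prop :=
  Tendsto (fun r : ℝ => f ((r : ℂ) * τ)) (nhdsWithin 1 (Set.Iio 1)) (nhds 0)

/-- An automorphism of the unit disk: a holomorphic bijection of the disk onto itself. -/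
def IsDiskAutomorphism (F : ℂ → ℂ) : Prop :=
  DifferentiableOn ℂ F unitDisk ∧ BijOn F unitDisk unitDisk

/-- The Möbius involution `m_τ(z) = (τ - z)/(1 - τ̄ z)`. -/
def mobius (τ z : ℂ) : ℂ := (τ - z) / (1 - (starRingEnd ℂ) τ * z)

/-!
Fix `t ≥ 0` and write `G = F t`. Since `f`, `f'`, `f''` vanish along the radius to `τ` and `f'''`
has angular limit `0`, integrating three times along radii and across the balls of radius
`(1 - r) / 2` about `r τ` (which lie in a Stolz angle) gives `f = o((1 - r) ^ 3)` on these balls.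
The flow started at `r τ` therefore stays in its ball up to time `t`, and
`G (r τ) - r τ = o((1 - r) ^ 3)`.

With `C w = (τ + w) / (τ - w)`, Julia's lemma (Schwarz–Pick in the limit `r → 1`) shows that
`Φ = C ∘ G - C` has nonnegative real part, and the contact estimate gives `Φ (r τ) = o(1 - r)`.
By the open mapping theorem and Harnack's inequality such a `Φ` vanishes, so `C ∘ G = C` and `G`
is the identity.
-/

open Metric Topology Asymptotics ComplexConjugate
open scoped Real

lemma unitDisk_eq_ball : unitDisk = ball (0 : ℂ) 1 := by
  ext z; simp [unitDisk]

lemma isOpen_unitDisk : IsOpen unitDisk := unitDisk_eq_ball ▸ isOpen_ball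

lemma zero_mem_unitDisk : (0 : ℂ) ∈ unitDisk := by simp [unitDisk]

lemma normSq_lt_one_iff_mem_unitDisk {z : ℂ} : normSq z < 1 ↔ z ∈ unitDisk := by
  simp [unitDisk, normSq_eq_norm_sq]

lemma one_sub_conj_mul_ne_zero {b a : ℂ} (hb : ‖b‖ ≤ 1) (ha : a ∈ unitDisk) :
    1 - conj b * a ≠ 0 := by
  have : ‖conj b * a‖ < 1 := by
    rw [norm_mul, norm_conj]
    exact (mul_le_of_le_one_left (norm_nonneg a) hb).trans_lt ha
  intro h
  rw [← sub_eq_zero.mp h, norm_one] at this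
  exact lt_irrefl _ this

lemma normSq_one_sub_conj_mul_sub_normSq_sub (b a : ℂ) :
    normSq (1 - conj b * a) - normSq (b - a) = (1 - normSq b) * (1 - normSq a) := by
  simp only [normSq_apply, sub_re, sub_im, mul_re, mul_im, conj_re, conj_im, one_re, one_im]
  ring

lemma one_sub_normSq_mobius {b a : ℂ} (hb : b ∈ unitDisk) (ha : a ∈ unitDisk) :
    (1 - normSq (mobius b a)) * normSq (1 - conj b * a) = (1 - normSq b) * (1 - normSq a) := by
  have hne : normSq (1 - conj b * a) ≠ 0 :=
    normSq_eq_zero.not.mpr (one_sub_conj_mul_ne_zero hb.le ha)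
  rw [mobius, map_div₀, sub_mul, div_mul_cancel₀ _ hne, one_mul,
    normSq_one_sub_conj_mul_sub_normSq_sub]

lemma mobius_mem_unitDisk {b a : ℂ} (hb : b ∈ unitDisk) (ha : a ∈ unitDisk) :
    mobius b a ∈ unitDisk := by
  have hpos : 0 < normSq (1 - conj b * a) := normSq_pos.mpr (one_sub_conj_mul_ne_zero hb.le ha)
  have hb' := normSq_lt_one_iff_mem_unitDisk.mpr hb
  have ha' := normSq_lt_one_iff_mem_unitDisk.mpr ha
  rw [← normSq_lt_one_iff_mem_unitDisk]
  nlinarith [one_sub_normSq_mobius hb ha, mul_pos (sub_pos.mpr hb') (sub_pos.mpr ha')]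

lemma mobius_self (b : ℂ) : mobius b b = 0 := by simp [mobius]

lemma mobius_zero (b : ℂ) : mobius b 0 = b := by simp [mobius]

lemma mobius_mobius {b a : ℂ} (hb : b ∈ unitDisk) (ha : a ∈ unitDisk) :
    mobius b (mobius b a) = a := by
  have h₁ := one_sub_conj_mul_ne_zero hb.le ha
  have h₂ := one_sub_conj_mul_ne_zero hb.le (mobius_mem_unitDisk hb ha)
  simp only [mobius] at h₂ ⊢
  rw [div_eq_iff h₂]
  simp only [div_eq_mul_inv]
  linear_combination (-(b - a)) * mul_inv_cancel₀ h₁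

lemma differentiableOn_mobius {b : ℂ} (hb : b ∈ unitDisk) :
    DifferentiableOn ℂ (mobius b) unitDisk :=
  ((differentiableOn_const _).sub differentiableOn_id).div
    ((differentiableOn_const _).sub ((differentiableOn_const _).mul differentiableOn_id))
    fun _ hz => one_sub_conj_mul_ne_zero hb.le hz

section SchwarzPick

variable {G : ℂ → ℂ}

/-- The Schwarz lemma applied to `mobius (G b) ∘ G ∘ mobius b`. -/
lemma norm_mobius_apply_le (hd : DifferentiableOn ℂ G unitDisk)
    (hm : MapsTo G unitDisk unitDisk) {a b : ℂ} (ha : a ∈ unitDisk) (hb : b ∈ unitDisk) :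
    ‖mobius (G b) (G a)‖ ≤ ‖mobius b a‖ := by
  have hGb := hm hb
  have hcomp : DifferentiableOn ℂ (mobius (G b) ∘ G ∘ mobius b) unitDisk :=
    (differentiableOn_mobius hGb).comp (hd.comp (differentiableOn_mobius hb)
      fun _ hw => mobius_mem_unitDisk hb hw) fun _ hw => hm (mobius_mem_unitDisk hb hw)
  have hmaps : MapsTo (mobius (G b) ∘ G ∘ mobius b) unitDisk unitDisk :=
    fun _ hw => mobius_mem_unitDisk hGb (hm (mobius_mem_unitDisk hb hw))
  rw [unitDisk_eq_ball] at hcomp hmaps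
  have := Complex.norm_le_norm_of_mapsTo_ball hcomp (hmaps.mono_right ball_subset_closedBall)
    (by simp [mobius_zero, mobius_self]) (mobius_mem_unitDisk hb ha)
  simpa [mobius_mobius hb ha] using this

lemma schwarzPick_normSq (hd : DifferentiableOn ℂ G unitDisk)
    (hm : MapsTo G unitDisk unitDisk) {a b : ℂ} (ha : a ∈ unitDisk) (hb : b ∈ unitDisk) :
    (1 - normSq b) * (1 - normSq a) * normSq (1 - conj (G b) * G a)
      ≤ (1 - normSq (G b)) * (1 - normSq (G a)) * normSq (1 - conj b * a) := by
  have hsq : normSq (mobius (G b) (G a)) ≤ normSq (mobius b a) := by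
    simp only [normSq_eq_norm_sq]
    exact pow_le_pow_left₀ (norm_nonneg _) (norm_mobius_apply_le hd hm ha hb) 2
  have h₁ := one_sub_normSq_mobius hb ha
  have h₂ := one_sub_normSq_mobius (hm hb) (hm ha)
  have hp₁ : 0 < normSq (1 - conj b * a) := normSq_pos.mpr (one_sub_conj_mul_ne_zero hb.le ha)
  have hp₂ : 0 < normSq (1 - conj (G b) * G a) :=
    normSq_pos.mpr (one_sub_conj_mul_ne_zero (hm hb).le (hm ha))
  rw [← h₁, ← h₂]
  nlinarith [mul_le_mul_of_nonneg_left hsq (mul_pos hp₁ hp₂).le]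

end SchwarzPick

section Radial

variable {τ : ℂ}

lemma norm_ofReal_mul (hτ : ‖τ‖ = 1) (r : ℝ) : ‖(r : ℂ) * τ‖ = |r| := by
  rw [norm_mul, hτ, mul_one, norm_real, Real.norm_eq_abs]

lemma ofReal_mul_mem_unitDisk (hτ : ‖τ‖ = 1) {r : ℝ} (h0 : 0 ≤ r) (h1 : r < 1) :
    (r : ℂ) * τ ∈ unitDisk := by
  show ‖(r : ℂ) * τ‖ < 1
  rwa [norm_ofReal_mul hτ, abs_of_nonneg h0]

lemma conj_mul_self_of_norm_eq_one (hτ : ‖τ‖ = 1) : conj τ * τ = 1 := by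
  rw [mul_comm, mul_conj, normSq_eq_norm_sq, hτ]; norm_num

lemma one_sub_conj_mul_ofReal_mul (hτ : ‖τ‖ = 1) (r : ℝ) :
    1 - conj τ * ((r : ℂ) * τ) = ((1 - r : ℝ) : ℂ) := by
  push_cast
  linear_combination (-(r : ℂ)) * conj_mul_self_of_norm_eq_one hτ

lemma abs_arg_le_pi_div_four {z : ℂ} (h : |z.im| ≤ z.re) : |arg z| ≤ π / 4 := by
  rcases eq_or_ne z 0 with rfl | hz
  · simp only [arg_zero, abs_zero]; positivity
  have hnorm : 0 < ‖z‖ := norm_pos_iff.mpr hz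
  have hcos : |arg z| = Real.arccos (z.re / ‖z‖) := by
    rw [← cos_arg hz, ← Real.cos_abs, Real.arccos_cos (abs_nonneg _) (abs_arg_le_pi z)]
  rw [hcos, Real.arccos_le_pi_div_four, le_div_iff₀ hnorm]
  have hsq : (√2 / 2 * ‖z‖) ^ 2 ≤ z.re ^ 2 := by
    rw [mul_pow, div_pow, Real.sq_sqrt zero_le_two, ← normSq_eq_norm_sq, normSq_apply]
    nlinarith [sq_abs z.im, abs_nonneg z.im]
  exact (abs_le_of_sq_le_sq hsq ((abs_nonneg _).trans h)).trans' (le_abs_self _)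

def radialBall (τ : ℂ) (r : ℝ) : Set ℂ := closedBall ((r : ℂ) * τ) ((1 - r) / 2)

lemma ofReal_mul_mem_radialBall {r : ℝ} (hr : r ≤ 1) : (r : ℂ) * τ ∈ radialBall τ r :=
  mem_closedBall_self (by linarith)

lemma radialBall_subset_unitDisk (hτ : ‖τ‖ = 1) {r : ℝ} (h0 : 0 ≤ r) (h1 : r < 1) :
    radialBall τ r ⊆ unitDisk := fun z hz => by
  have hz' : ‖z - r * τ‖ ≤ (1 - r) / 2 := by rw [← dist_eq_norm]; exact hz
  calc ‖z‖ ≤ ‖(r : ℂ) * τ‖ + ‖z - r * τ‖ := norm_le_insert' _ _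
    _ ≤ r + (1 - r) / 2 := by rw [norm_ofReal_mul hτ, abs_of_nonneg h0]; linarith
    _ < 1 := by linarith

lemma radialBall_subset_closedBall (hτ : ‖τ‖ = 1) {r : ℝ} (hr : r ≤ 1) :
    radialBall τ r ⊆ closedBall τ (2 * (1 - r)) := fun z hz => by
  have hrτ : dist ((r : ℂ) * τ) τ = 1 - r := by
    rw [dist_eq_norm, ← neg_sub, norm_neg, ← one_sub_mul, ← ofReal_one, ← ofReal_sub,
      norm_ofReal_mul hτ, abs_of_nonneg (by linarith)]
  calc dist z τ ≤ dist z (r * τ) + dist ((r : ℂ) * τ) τ := dist_triangle _ _ _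
    _ ≤ (1 - r) / 2 + (1 - r) := add_le_add hz hrτ.le
    _ ≤ 2 * (1 - r) := by linarith

lemma radialBall_subset_stolzAngle (hτ : ‖τ‖ = 1) {r : ℝ} (h0 : 0 ≤ r) (h1 : r < 1) {α : ℝ}
    (hα : π / 4 < α) : radialBall τ r ⊆ stolzAngle τ α := fun z hz => by
  refine ⟨radialBall_subset_unitDisk hτ h0 h1 hz, (abs_arg_le_pi_div_four ?_).trans_lt hα⟩
  have hw : ‖conj τ * (z - r * τ)‖ ≤ (1 - r) / 2 := by
    rw [norm_mul, norm_conj, hτ, one_mul, ← dist_eq_norm]; exact hz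
  have hζ : 1 - conj τ * z = ((1 - r : ℝ) : ℂ) - conj τ * (z - r * τ) := by
    rw [← one_sub_conj_mul_ofReal_mul hτ]; ring
  have hre := abs_re_le_norm (conj τ * (z - r * τ))
  have him := abs_im_le_norm (conj τ * (z - r * τ))
  rw [hζ, sub_re, sub_im, ofReal_re, ofReal_im, zero_sub, abs_neg]
  linarith [le_abs_self (conj τ * (z - r * τ)).re]

lemma tendsto_one_sub_nhdsLT_one : Tendsto (fun r : ℝ => 1 - r) (𝓝[<] 1) (𝓝 0) := by
  simpa using (tendsto_nhdsWithin_of_tendsto_nhds (tendsto_id (x := 𝓝 (1 : ℝ)))).const_sub 1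

lemma tendsto_ofReal_mul_nhds (τ : ℂ) :
    Tendsto (fun r : ℝ => (r : ℂ) * τ) (𝓝[<] 1) (𝓝 τ) := by
  simpa using ((continuous_ofReal.tendsto 1).mono_left nhdsWithin_le_nhds).mul_const τ

lemma tendsto_ofReal_mul_nhdsWithin_stolzAngle (hτ : ‖τ‖ = 1) {α : ℝ} (hα : 0 < α) :
    Tendsto (fun r : ℝ => (r : ℂ) * τ) (𝓝[<] 1) (𝓝[stolzAngle τ α] τ) := by
  refine tendsto_nhdsWithin_iff.mpr ⟨?_, ?_⟩
  · exact tendsto_ofReal_mul_nhds τ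
  · filter_upwards [Ioo_mem_nhdsLT zero_lt_one] with r hr
    refine ⟨ofReal_mul_mem_unitDisk hτ hr.1.le hr.2, ?_⟩
    rwa [one_sub_conj_mul_ofReal_mul hτ, arg_ofReal_of_nonneg (by linarith [hr.2]), abs_zero]

namespace AngularLimit

variable {g : ℂ → ℂ} {L : ℂ}

lemma tendsto_ofReal_mul (h : AngularLimit g τ L) (hτ : ‖τ‖ = 1) :
    Tendsto (fun r : ℝ => g (r * τ)) (𝓝[<] 1) (𝓝 L) :=
  (h (π / 3) (by positivity) (by linarith [Real.pi_pos])).comp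
    (tendsto_ofReal_mul_nhdsWithin_stolzAngle hτ (by positivity))

lemma eventually_norm_sub_le_on_radialBall (h : AngularLimit g τ L) (hτ : ‖τ‖ = 1) {ε : ℝ}
    (hε : 0 < ε) :
    ∀ᶠ r in 𝓝[<] 1, ∀ z ∈ radialBall τ r, ‖g z - L‖ ≤ ε := by
  have hπ : π / 4 < π / 3 := by linarith [Real.pi_pos]
  obtain ⟨δ, hδ, hg⟩ := Metric.tendsto_nhdsWithin_nhds.mp
    (h (π / 3) (by positivity) (by linarith [Real.pi_pos])) ε hε
  have hnear : ∀ᶠ r in 𝓝[<] (1 : ℝ), 2 * (1 - r) < δ := by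
    simpa using (tendsto_one_sub_nhdsLT_one.const_mul 2).eventually
      (gt_mem_nhds (by simpa using hδ))
  filter_upwards [hnear, Ioo_mem_nhdsLT zero_lt_one] with r hr hr01 z hz
  rw [← dist_eq_norm]
  exact (hg (radialBall_subset_stolzAngle hτ hr01.1.le hr01.2 hπ hz)
    ((radialBall_subset_closedBall hτ hr01.2.le hz).trans_lt hr)).le

end AngularLimit

end Radial

section DerivativeBounds

variable {τ : ℂ} {g : ℂ → ℂ}

lemma norm_ofReal_mul_le_of_norm_deriv_le (hg : DifferentiableOn ℂ g unitDisk) (hτ : ‖τ‖ = 1)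
    (hlim : Tendsto (fun s : ℝ => g (s * τ)) (𝓝[<] 1) (𝓝 0)) {r₀ C : ℝ} {k : ℕ} (hr₀ : 0 ≤ r₀)
    (hd : ∀ s ∈ Ioo r₀ 1, ‖deriv g (s * τ)‖ ≤ C * (1 - s) ^ k) {s : ℝ} (hs : s ∈ Ioo r₀ 1) :
    ‖g (s * τ)‖ ≤ C * (1 - s) ^ (k + 1) := by
  have hC : 0 ≤ C := nonneg_of_mul_nonneg_left ((norm_nonneg _).trans (hd s hs))
    (pow_pos (sub_pos.mpr hs.2) k)
  have hincr : ∀ s' ∈ Ioo s 1, ‖g (s' * τ) - g (s * τ)‖ ≤ C * (1 - s) ^ k * (s' - s) := by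
    intro s' hs'
    have hmem : ∀ c ∈ Icc s s', c ∈ Ioo r₀ 1 := fun c hc =>
      ⟨hs.1.trans_le hc.1, hc.2.trans_lt hs'.2⟩
    refine norm_image_sub_le_of_norm_deriv_le_segment' (f := fun c : ℝ => g (c * τ))
      (f' := fun c => deriv g (c * τ) * τ) (fun c hc => ?_) (fun c hc => ?_) s'
      ⟨hs'.1.le, le_rfl⟩
    · have hc := hmem c hc
      have hgc : DifferentiableAt ℂ g (c * τ) := hg.differentiableAt
        (isOpen_unitDisk.mem_nhds (ofReal_mul_mem_unitDisk hτ (hr₀.trans hc.1.le) hc.2))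
      have := hgc.hasDerivAt.comp (c : ℂ) ((hasDerivAt_id _).mul_const τ)
      simpa using (this.comp_ofReal).hasDerivWithinAt
    · have hc' := hmem c (Ico_subset_Icc_self hc)
      rw [norm_mul, hτ, mul_one]
      exact (hd c hc').trans (mul_le_mul_of_nonneg_left
        (pow_le_pow_left₀ (by linarith [hc'.2]) (by linarith [hc.1]) k) hC)
  have htend : Tendsto (fun s' : ℝ => ‖g (s' * τ) - g (s * τ)‖) (𝓝[<] 1) (𝓝 ‖g (s * τ)‖) := by
    simpa using (hlim.sub_const (g (s * τ))).norm
  refine le_of_tendsto htend ?_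
  filter_upwards [Ioo_mem_nhdsLT hs.2] with s' hs'
  calc ‖g (s' * τ) - g (s * τ)‖ ≤ C * (1 - s) ^ k * (s' - s) := hincr s' hs'
    _ ≤ C * (1 - s) ^ k * (1 - s) :=
      mul_le_mul_of_nonneg_left (by linarith [hs'.2]) (by positivity [hs.2])
    _ = C * (1 - s) ^ (k + 1) := by ring

lemma norm_le_on_radialBall_of_norm_deriv_le (hg : DifferentiableOn ℂ g unitDisk)
    (hτ : ‖τ‖ = 1) (hlim : Tendsto (fun s : ℝ => g (s * τ)) (𝓝[<] 1) (𝓝 0)) {r₀ C : ℝ} {k : ℕ}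
    (hr₀ : 0 ≤ r₀) (hd : ∀ r ∈ Ioo r₀ 1, ∀ z ∈ radialBall τ r, ‖deriv g z‖ ≤ C * (1 - r) ^ k) :
    ∀ r ∈ Ioo r₀ 1, ∀ z ∈ radialBall τ r, ‖g z‖ ≤ 3 / 2 * C * (1 - r) ^ (k + 1) := by
  intro r hr z hz
  have hball := radialBall_subset_unitDisk hτ (hr₀.trans hr.1.le) hr.2
  have hcenter : ‖g (r * τ)‖ ≤ C * (1 - r) ^ (k + 1) :=
    norm_ofReal_mul_le_of_norm_deriv_le hg hτ hlim hr₀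
      (fun s hs => hd s hs _ (ofReal_mul_mem_radialBall hs.2.le)) hr
  have hmvt : ‖g z - g (r * τ)‖ ≤ C * (1 - r) ^ k * ‖z - r * τ‖ :=
    (convex_closedBall _ _).norm_image_sub_le_of_norm_deriv_le
      (fun w hw => hg.differentiableAt (isOpen_unitDisk.mem_nhds (hball hw))) (hd r hr)
      (ofReal_mul_mem_radialBall hr.2.le) hz
  have hz' : ‖z - r * τ‖ ≤ (1 - r) / 2 := by rw [← dist_eq_norm]; exact hz
  have hC : 0 ≤ C * (1 - r) ^ k := (norm_nonneg _).trans (hd r hr z hz)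
  calc ‖g z‖ ≤ ‖g (r * τ)‖ + ‖g z - g (r * τ)‖ := norm_le_insert' _ _
    _ ≤ C * (1 - r) ^ (k + 1) + C * (1 - r) ^ k * ((1 - r) / 2) :=
      add_le_add hcenter (hmvt.trans (mul_le_mul_of_nonneg_left hz' hC))
    _ = 3 / 2 * C * (1 - r) ^ (k + 1) := by ring

end DerivativeBounds

lemma eventually_norm_le_on_radialBall_of_angularLimit_deriv {f : ℂ → ℂ} {τ : ℂ}
    (hf : DifferentiableOn ℂ f unitDisk) (hτ : ‖τ‖ = 1) (hnull : BoundaryNullPoint f τ)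
    (hβ : AngularLimit (deriv f) τ 0) (hα : AngularLimit (deriv (deriv f)) τ 0)
    (hγ : AngularLimit (deriv (deriv (deriv f))) τ 0) {ε : ℝ} (hε : 0 < ε) :
    ∀ᶠ r in 𝓝[<] 1, ∀ z ∈ radialBall τ r, ‖f z‖ ≤ ε * (1 - r) ^ 3 := by
  have han := hf.analyticOnNhd isOpen_unitDisk
  -- `(3 / 2) ^ 3 < 4`
  obtain ⟨l, hl, hsub⟩ := mem_nhdsLT_iff_exists_Ioo_subset.mp
    (hγ.eventually_norm_sub_le_on_radialBall hτ (ε := ε / 4) (by positivity))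
  set r₀ := max l 0
  have hd3 : ∀ r ∈ Ioo r₀ 1, ∀ z ∈ radialBall τ r,
      ‖deriv (deriv (deriv f)) z‖ ≤ ε / 4 * (1 - r) ^ 0 := fun r hr z hz => by
    simpa using hsub ⟨(le_max_left _ _).trans_lt hr.1, hr.2⟩ z hz
  have hd2 := norm_le_on_radialBall_of_norm_deriv_le han.deriv.deriv.differentiableOn hτ
    (hα.tendsto_ofReal_mul hτ) (le_max_right _ _) hd3
  have hd1 := norm_le_on_radialBall_of_norm_deriv_le han.deriv.differentiableOn hτ
    (hβ.tendsto_ofReal_mul hτ) (le_max_right _ _) hd2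
  have hd0 := norm_le_on_radialBall_of_norm_deriv_le hf hτ hnull (le_max_right _ _) hd1
  filter_upwards [Ioo_mem_nhdsLT (max_lt hl zero_lt_one)] with r hr z hz
  refine (hd0 r hr z hz).trans (mul_le_mul_of_nonneg_right ?_ (by positivity [hr.2]))
  linarith

lemma norm_sub_le_mul_of_norm_deriv_lt_on_closedBall {E : Type*} [NormedAddCommGroup E]
    [NormedSpace ℝ E] {u u' : ℝ → E} {T δ ρ : ℝ} (hδ : 0 ≤ δ) (hρ : δ * T ≤ ρ)
    (hu : ∀ s ∈ Icc 0 T, HasDerivWithinAt u (u' s) (Ici 0) s)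
    (hbound : ∀ s ∈ Ico 0 T, ‖u s - u 0‖ ≤ ρ → ‖u' s‖ < δ) :
    ∀ s ∈ Icc 0 T, ‖u s - u 0‖ ≤ δ * s := by
  refine image_norm_le_of_norm_deriv_right_lt_deriv_boundary' (f := fun s => u s - u 0)
    (B := fun s => δ * s) (B' := fun _ => δ) (fun s hs => ?_) (fun s hs => ?_) (by simp)
    (by fun_prop) (fun s _ => ?_) (fun s hs heq => hbound s hs ?_)
  · exact ((hu s hs).sub_const (u 0)).continuousWithinAt.mono fun x hx => hx.1
  · exact ((hu s (Ico_subset_Icc_self hs)).sub_const (u 0)).mono fun x hx => hs.1.trans hx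
  · simpa using ((hasDerivAt_id s).const_mul δ).hasDerivWithinAt
  · rw [heq]; exact (mul_le_mul_of_nonneg_left hs.2.le hδ).trans hρ

lemma isLittleO_flow_ofReal_mul_sub {F : ℝ → ℂ → ℂ} {f : ℂ → ℂ} {τ : ℂ}
    (hf : DifferentiableOn ℂ f unitDisk) (hgen : Generates f F) (hτ : ‖τ‖ = 1)
    (hnull : BoundaryNullPoint f τ) (hβ : AngularLimit (deriv f) τ 0)
    (hα : AngularLimit (deriv (deriv f)) τ 0) (hγ : AngularLimit (deriv (deriv (deriv f))) τ 0)
    {t : ℝ} (ht : 0 ≤ t) :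
    (fun r : ℝ => F t (r * τ) - r * τ) =o[𝓝[<] 1] fun r => (1 - r) ^ 3 := by
  rw [isLittleO_iff]
  intro c hc
  set ε := c / (2 * (t + 1))
  have hshort : ∀ᶠ r in 𝓝[<] (1 : ℝ), c * (1 - r) ^ 2 < 1 / 2 := by
    simpa using ((tendsto_one_sub_nhdsLT_one.pow 2).const_mul c).eventually
      (gt_mem_nhds (by norm_num))
  filter_upwards [eventually_norm_le_on_radialBall_of_angularLimit_deriv hf hτ hnull hβ hα hγ
    (ε := ε) (by positivity), hshort, Ioo_mem_nhdsLT zero_lt_one] with r hsmall hshort hr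
  obtain ⟨hF0, hderiv⟩ := hgen _ (ofReal_mul_mem_unitDisk hτ hr.1.le hr.2)
  have hr1 : 0 < 1 - r := sub_pos.mpr hr.2
  have hδt : 2 * ε * (1 - r) ^ 3 * t ≤ c * (1 - r) ^ 3 := by
    have : 2 * ε * t ≤ c := by
      rw [show 2 * ε * t = c * (t / (t + 1)) by simp only [ε]; field_simp]
      exact mul_le_of_le_one_right hc.le ((div_le_one (by positivity)).mpr (by linarith))
    nlinarith [pow_pos hr1 3]
  have hflow := norm_sub_le_mul_of_norm_deriv_lt_on_closedBall (u := fun s => F s (r * τ))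
    (u' := fun s => -f (F s (r * τ))) (δ := 2 * ε * (1 - r) ^ 3) (ρ := (1 - r) / 2)
    (by positivity) (hδt.trans (by nlinarith)) (fun s hs => hderiv s hs.1)
    (fun s _ hs => ?_) t ⟨ht, le_rfl⟩
  · rw [norm_pow, Real.norm_of_nonneg hr1.le]
    simp only [hF0] at hflow
    exact hflow.trans hδt
  · rw [norm_neg]
    refine (hsmall _ ?_).trans_lt (by nlinarith [pow_pos hr1 3, show 0 < ε by positivity])
    rwa [hF0, ← dist_eq_norm] at hs

section Cayley

variable {τ : ℂ}

/-- Maps the unit disk onto the right half-plane and `τ` to `∞`; its real part is the Poisson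
kernel at `τ`. -/
def cayley (τ w : ℂ) : ℂ := (τ + w) / (τ - w)

lemma sub_ne_zero_of_mem_unitDisk (hτ : ‖τ‖ = 1) {w : ℂ} (hw : w ∈ unitDisk) : τ - w ≠ 0 := by
  intro h
  have : ‖w‖ < 1 := hw
  rw [← sub_eq_zero.mp h, hτ] at this
  exact lt_irrefl _ this

lemma re_cayley (hτ : ‖τ‖ = 1) (w : ℂ) :
    (cayley τ w).re = (1 - normSq w) / normSq (1 - conj τ * w) := by
  have hτ' : τ.re * τ.re + τ.im * τ.im = 1 := by
    rw [← normSq_apply, normSq_eq_norm_sq, hτ, one_pow]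
  have hden : normSq (τ - w) = normSq (1 - conj τ * w) := by
    rw [show τ - w = τ * (1 - conj τ * w) by
      linear_combination w * conj_mul_self_of_norm_eq_one hτ,
      normSq_mul, normSq_eq_norm_sq τ, hτ, one_pow, one_mul]
  rw [cayley, div_re, ← hden, ← add_div]
  congr 1
  simp only [add_re, add_im, sub_re, sub_im, normSq_apply]
  linear_combination hτ'

lemma cayley_sub_cayley {x y : ℂ} (hx : τ - x ≠ 0) (hy : τ - y ≠ 0) :
    cayley τ x - cayley τ y = 2 * τ * (x - y) / ((τ - x) * (τ - y)) := by
  rw [cayley, cayley, div_sub_div _ _ hx hy]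
  ring

lemma cayley_injOn (hτ : ‖τ‖ = 1) : InjOn (cayley τ) unitDisk := fun x hx y hy h => by
  have hτ0 : τ ≠ 0 := norm_ne_zero_iff.mp (by rw [hτ]; exact one_ne_zero)
  have := cayley_sub_cayley (sub_ne_zero_of_mem_unitDisk hτ hx)
    (sub_ne_zero_of_mem_unitDisk hτ hy)
  rw [h, sub_self, eq_comm, div_eq_zero_iff] at this
  rcases this with h | h
  · simpa [hτ0, sub_eq_zero] using h
  · exact absurd h (mul_ne_zero (sub_ne_zero_of_mem_unitDisk hτ hx)
      (sub_ne_zero_of_mem_unitDisk hτ hy))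

lemma differentiableOn_cayley (hτ : ‖τ‖ = 1) : DifferentiableOn ℂ (cayley τ) unitDisk :=
  ((differentiableOn_const τ).add differentiableOn_id).div
    ((differentiableOn_const τ).sub differentiableOn_id)
    fun _ hw => sub_ne_zero_of_mem_unitDisk hτ hw

/-- The pole at `τ` costs a factor `(1 - r) ^ 2`, which is why third-order contact is needed. -/
lemma isLittleO_cayley_sub_cayley (hτ : ‖τ‖ = 1) {g : ℝ → ℂ}
    (ho : (fun r : ℝ => g r - r * τ) =o[𝓝[<] 1] fun r => (1 - r) ^ 3) :
    (fun r : ℝ => cayley τ (g r) - cayley τ (r * τ)) =o[𝓝[<] 1] fun r => 1 - r := by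
  rw [isLittleO_iff]
  intro c hc
  filter_upwards [ho.bound (c := c / 4) (by positivity), ho.bound one_half_pos,
    Ioo_mem_nhdsLT zero_lt_one] with r hsmall hclose hr
  have hr1 : 0 < 1 - r := sub_pos.mpr hr.2
  rw [norm_pow, Real.norm_of_nonneg hr1.le] at hsmall hclose
  rw [Real.norm_of_nonneg hr1.le]
  have hrτ : ‖τ - r * τ‖ = 1 - r := by
    rw [← one_sub_mul, ← ofReal_one, ← ofReal_sub, norm_ofReal_mul hτ, abs_of_pos hr1]
  have hgτ : (1 - r) / 2 ≤ ‖τ - g r‖ := by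
    have : ‖τ - r * τ‖ ≤ ‖τ - g r‖ + ‖g r - r * τ‖ := norm_sub_le_norm_sub_add_norm_sub _ _ _
    nlinarith [pow_le_pow_of_le_one hr1.le (by linarith [hr.1]) (show 1 ≤ 3 by norm_num)]
  have hpos : 0 < ‖τ - g r‖ * (1 - r) := mul_pos (by linarith) hr1
  rw [cayley_sub_cayley (norm_pos_iff.mp (by linarith)) (by
      rw [← norm_pos_iff, hrτ]; exact hr1), norm_div, norm_mul, norm_mul, norm_mul, hrτ, hτ,
    div_le_iff₀ hpos, Complex.norm_two, mul_one]
  nlinarith [mul_le_mul_of_nonneg_left hgτ (by positivity : (0 : ℝ) ≤ c * (1 - r) ^ 2)]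

end Cayley

section Julia

variable {τ : ℂ}

lemma tendsto_one_sub_normSq_div_one_sub_sq (hτ : ‖τ‖ = 1) {g : ℝ → ℂ}
    (hg : ∀ᶠ r in 𝓝[<] 1, ‖g r‖ ≤ 1)
    (ho : (fun r : ℝ => g r - r * τ) =o[𝓝[<] 1] fun r => 1 - r) :
    Tendsto (fun r : ℝ => (1 - normSq (g r)) / (1 - r ^ 2)) (𝓝[<] 1) (𝓝 1) := by
  have hsq : (fun r : ℝ => normSq (g r) - r ^ 2) =o[𝓝[<] 1] fun r => 1 - r ^ 2 := by
    rw [isLittleO_iff]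
    intro c hc
    filter_upwards [ho.bound (c := c / 2) (by positivity), hg, Ioo_mem_nhdsLT zero_lt_one]
      with r hsmall hgr hr
    have hr1 : 0 < 1 - r := sub_pos.mpr hr.2
    rw [Real.norm_of_nonneg hr1.le] at hsmall
    rw [Real.norm_eq_abs, Real.norm_eq_abs, abs_of_pos (by nlinarith [hr.1, hr.2] : 0 < 1 - r ^ 2),
      normSq_eq_norm_sq,
      show ‖g r‖ ^ 2 - r ^ 2 = (‖g r‖ - r) * (‖g r‖ + r) by ring, abs_mul,
      abs_of_nonneg (by linarith [norm_nonneg (g r), hr.1] : 0 ≤ ‖g r‖ + r)]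
    have hdiff : |‖g r‖ - r| ≤ ‖g r - r * τ‖ := by
      simpa [norm_ofReal_mul hτ, abs_of_pos hr.1, hτ] using abs_norm_sub_norm_le (g r) (r * τ)
    nlinarith [abs_nonneg (‖g r‖ - r), hr.1, hr.2]
  have h := (tendsto_const_nhds (x := (1 : ℝ))).sub hsq.tendsto_div_nhds_zero
  rw [sub_zero] at h
  refine h.congr' ?_
  filter_upwards [Ioo_mem_nhdsLT zero_lt_one] with r hr
  have : 1 - r ^ 2 ≠ 0 := by nlinarith [hr.1, hr.2]
  field_simp
  ring

/-- Julia's lemma: Schwarz–Pick at the radial points `r τ`, in the limit `r → 1`. -/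
lemma julia_inequality {G : ℂ → ℂ} (hd : DifferentiableOn ℂ G unitDisk)
    (hm : MapsTo G unitDisk unitDisk) (hτ : ‖τ‖ = 1)
    (ho : (fun r : ℝ => G (r * τ) - r * τ) =o[𝓝[<] 1] fun r => 1 - r) {a : ℂ}
    (ha : a ∈ unitDisk) :
    (1 - normSq a) * normSq (1 - conj τ * G a) ≤ (1 - normSq (G a)) * normSq (1 - conj τ * a) := by
  have hGτ : Tendsto (fun r : ℝ => G (r * τ)) (𝓝[<] 1) (𝓝 τ) := by
    have hsub := ho.trans_tendsto tendsto_one_sub_nhdsLT_one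
    simpa using hsub.add (tendsto_ofReal_mul_nhds τ)
  have hratio := tendsto_one_sub_normSq_div_one_sub_sq hτ (g := fun r => G (r * τ))
    (by filter_upwards [Ioo_mem_nhdsLT zero_lt_one] with r hr
        exact (hm (ofReal_mul_mem_unitDisk hτ hr.1.le hr.2)).le) ho
  have hlhs : Continuous fun w : ℂ => (1 - normSq a) * normSq (1 - conj w * G a) := by fun_prop
  have hrhs : Continuous fun w : ℂ => (1 - normSq (G a)) * normSq (1 - conj w * a) := by fun_prop
  refine le_of_tendsto_of_tendsto ((hlhs.tendsto τ).comp hGτ)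
    (by simpa using hratio.mul ((hrhs.tendsto τ).comp (tendsto_ofReal_mul_nhds τ))) ?_
  filter_upwards [Ioo_mem_nhdsLT zero_lt_one] with r hr
  have hr2 : 0 < 1 - r ^ 2 := by nlinarith [hr.1, hr.2]
  have hsp := schwarzPick_normSq hd hm ha (ofReal_mul_mem_unitDisk hτ hr.1.le hr.2)
  rw [normSq_mul, normSq_ofReal, normSq_eq_norm_sq τ, hτ, map_mul, conj_ofReal] at hsp
  simp only [Function.comp_apply]
  rw [div_mul_eq_mul_div, le_div_iff₀ hr2]
  linarith

lemma re_cayley_le_re_cayley_apply {G : ℂ → ℂ} (hd : DifferentiableOn ℂ G unitDisk)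
    (hm : MapsTo G unitDisk unitDisk) (hτ : ‖τ‖ = 1)
    (ho : (fun r : ℝ => G (r * τ) - r * τ) =o[𝓝[<] 1] fun r => 1 - r) {a : ℂ}
    (ha : a ∈ unitDisk) : (cayley τ a).re ≤ (cayley τ (G a)).re := by
  rw [re_cayley hτ, re_cayley hτ,
    div_le_div_iff₀ (normSq_pos.mpr (one_sub_conj_mul_ne_zero hτ.le ha))
      (normSq_pos.mpr (one_sub_conj_mul_ne_zero hτ.le (hm ha)))]
  exact julia_inequality hd hm hτ ho ha

end Julia

section Rigidity

variable {Φ : ℂ → ℂ}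

/-- The Schwarz lemma for `(Φ - Φ 0) / (Φ + conj (Φ 0))`, a self-map of the disk fixing `0`. -/
lemma norm_sub_apply_zero_le (hΦ : DifferentiableOn ℂ Φ unitDisk)
    (hre : ∀ z ∈ unitDisk, 0 < (Φ z).re) {z : ℂ} (hz : z ∈ unitDisk) :
    ‖Φ z - Φ 0‖ ≤ ‖z‖ * ‖Φ z + conj (Φ 0)‖ := by
  have hden : ∀ ζ ∈ unitDisk, Φ ζ + conj (Φ 0) ≠ 0 := fun ζ hζ h => by
    have := congrArg re h
    rw [add_re, conj_re, zero_re] at this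
    linarith [hre ζ hζ, hre 0 zero_mem_unitDisk]
  have hgap : ∀ ζ, normSq (Φ ζ + conj (Φ 0)) - normSq (Φ ζ - Φ 0) = 4 * (Φ ζ).re * (Φ 0).re :=
    fun ζ => by simp only [normSq_apply, add_re, add_im, sub_re, sub_im, conj_re, conj_im]; ring
  have hmaps : MapsTo (fun ζ => (Φ ζ - Φ 0) / (Φ ζ + conj (Φ 0))) (ball 0 1) (closedBall 0 1) := by
    intro ζ hζ
    rw [← unitDisk_eq_ball] at hζ
    rw [mem_closedBall_zero_iff, norm_div, div_le_one (norm_pos_iff.mpr (hden ζ hζ))]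
    refine (sq_le_sq₀ (norm_nonneg _) (norm_nonneg _)).mp ?_
    rw [← normSq_eq_norm_sq, ← normSq_eq_norm_sq]
    nlinarith [hgap ζ, hre ζ hζ, hre 0 zero_mem_unitDisk]
  have hschwarz := Complex.norm_le_norm_of_mapsTo_ball
    (by rw [← unitDisk_eq_ball]; exact (hΦ.sub_const _).div (hΦ.add_const _) hden) hmaps
    (by simp) (show ‖z‖ < 1 from hz)
  rwa [norm_div, div_le_iff₀ (norm_pos_iff.mpr (hden z hz))] at hschwarz

lemma harnack_re (hΦ : DifferentiableOn ℂ Φ unitDisk) (hre : ∀ z ∈ unitDisk, 0 < (Φ z).re)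
    {z : ℂ} (hz : z ∈ unitDisk) : (Φ 0).re * (1 - ‖z‖) ≤ (1 + ‖z‖) * (Φ z).re := by
  have hsq : normSq (Φ z - Φ 0) ≤ ‖z‖ ^ 2 * normSq (Φ z + conj (Φ 0)) := by
    rw [normSq_eq_norm_sq, normSq_eq_norm_sq, ← mul_pow]
    exact pow_le_pow_left₀ (norm_nonneg _) (norm_sub_apply_zero_le hΦ hre hz) 2
  simp only [normSq_apply, add_re, add_im, sub_re, sub_im, conj_re, conj_im] at hsq
  have hz1 : ‖z‖ < 1 := hz
  have hre' : ((Φ z).re - (Φ 0).re) ^ 2 ≤ (‖z‖ * ((Φ z).re + (Φ 0).re)) ^ 2 := by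
    nlinarith [mul_nonneg (sub_nonneg.mpr (pow_le_one₀ (n := 2) (norm_nonneg z) hz1.le))
      (sq_nonneg ((Φ z).im - (Φ 0).im))]
  have := abs_le_of_sq_le_sq hre'
    (mul_nonneg (norm_nonneg z) (by linarith [hre z hz, hre 0 zero_mem_unitDisk]))
  nlinarith [(abs_le.mp this).1]

/-- If `Φ` is not constant it is open, so `Re Φ > 0`, and Harnack's inequality gives
`Re Φ (r τ) ≥ Re Φ 0 * (1 - r) / 2`. -/
lemma eqOn_zero_of_re_nonneg_of_isLittleO (hΦ : DifferentiableOn ℂ Φ unitDisk)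
    (hre : ∀ z ∈ unitDisk, 0 ≤ (Φ z).re) {τ : ℂ} (hτ : ‖τ‖ = 1)
    (ho : (fun r : ℝ => Φ (r * τ)) =o[𝓝[<] 1] fun r => 1 - r) : ∀ z ∈ unitDisk, Φ z = 0 := by
  have hradial : ∀ᶠ r : ℝ in 𝓝[<] 1, (r : ℂ) * τ ∈ unitDisk := by
    filter_upwards [Ioo_mem_nhdsLT zero_lt_one] with r hr
    exact ofReal_mul_mem_unitDisk hτ hr.1.le hr.2
  rcases (hΦ.analyticOnNhd isOpen_unitDisk).is_constant_or_isOpen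
    (by rw [unitDisk_eq_ball]; exact (convex_ball 0 1).isPreconnected) with ⟨w, hw⟩ | hopen
  · have hconst : (fun _ : ℝ => w) =o[𝓝[<] 1] fun r => 1 - r :=
      ho.congr' (by filter_upwards [hradial] with r hr using hw _ hr) EventuallyEq.rfl
    rcases isLittleO_const_left.mp hconst with rfl | htop
    · exact hw
    · exact absurd htop (not_tendsto_atTop_of_tendsto_nhds tendsto_one_sub_nhdsLT_one.norm)
  have hpos : ∀ z ∈ unitDisk, 0 < (Φ z).re := fun z hz => by
    have := interior_maximal (image_subset_iff.mpr hre : Φ '' unitDisk ⊆ {w | 0 ≤ w.re})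
      (hopen _ subset_rfl isOpen_unitDisk) (mem_image_of_mem Φ hz)
    rwa [interior_setOfPred_le_re] at this
  have h0 := hpos 0 zero_mem_unitDisk
  obtain ⟨r, ⟨hr, hsmall⟩, hr01⟩ :=
    ((hradial.and (ho.bound (c := (Φ 0).re / 4) (by positivity))).and
      (Ioo_mem_nhdsLT zero_lt_one)).exists
  have hharnack := harnack_re hΦ hpos hr
  rw [norm_ofReal_mul hτ, abs_of_pos hr01.1] at hharnack
  rw [Real.norm_of_nonneg (sub_pos.mpr hr01.2).le] at hsmall
  nlinarith [re_le_norm (Φ (r * τ)), hpos _ hr, mul_pos h0 (sub_pos.mpr hr01.2)]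

end Rigidity

/-- Corollary 1: a parabolic semigroup whose generator has vanishing second and third
angular derivatives at the Denjoy--Wolff point is trivial. -/
theorem parabolic_semigroup_trivial_of_vanishing_derivatives
    (F : ℝ → ℂ → ℂ) (f : ℂ → ℂ)
    (hS : ContSemigroupOn F) (hf : DifferentiableOn ℂ f unitDisk)
    (hgen : Generates f F)
    (τ : ℂ) (hτ : ‖τ‖ = 1) (hnull : BoundaryNullPoint f τ)
    (hβ : AngularLimit (deriv f) τ 0)
    (hα : AngularLimit (deriv (deriv f)) τ 0)
    (hγ : AngularLimit (deriv (deriv (deriv f))) τ 0) :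
    ∀ t : ℝ, 0 ≤ t → ∀ z ∈ unitDisk, F t z = z := by
  intro t ht z hz
  have hcontact := isLittleO_flow_ofReal_mul_sub hf hgen hτ hnull hβ hα hγ ht
  have hjulia (w : ℂ) (hw : w ∈ unitDisk) : (cayley τ w).re ≤ (cayley τ (F t w)).re :=
    re_cayley_le_re_cayley_apply (hS.holo t ht) (hS.maps t ht) hτ
      (hcontact.trans ((isLittleO_pow_id (by norm_num)).comp_tendsto tendsto_one_sub_nhdsLT_one))
      hw
  have hΦ := eqOn_zero_of_re_nonneg_of_isLittleO
    (((differentiableOn_cayley hτ).comp (hS.holo t ht) (hS.maps t ht)).sub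
      (differentiableOn_cayley hτ))
    (fun w hw => sub_nonneg.mpr (hjulia w hw)) hτ (isLittleO_cayley_sub_cayley hτ hcontact) z hz
  exact cayley_injOn hτ (hS.maps t ht hz) hz (sub_eq_zero.mp hΦ)
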